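/- Let f : I ⊆ [0,∞) → ℝ be differentiable on I° with f' integrable on [a,b], where a, b ∈ I°, a < b. Fix λ, μ ∈ [0,∞) with λ + μ > 0 and q > 1 with 1/p + 1/q = 1, and suppose |f'|^q is convex on [a,b]. Then |(λ f(a) + μ f(b))/(λ+μ) − (1/(b−a)) ∫_a^b f(x) dx| ≤ ((b−a)/(λ+μ)) · ((λ^{p+1} + μ^{p+1})/(λ+μ))^{1/p} · (1/(p+1))^{1/p} · (1/2)^{1/q} · (|f'(a)|^q + |f'(b)|^q)^{1/q}. -/

import Mathlib

/-!
With `c = (λb + μa)/(λ + μ)`, integration by parts turns the left-hand side into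
`(1/(b - a)) ∫ₐᵇ (x - c) f'(x) dx`. Hölder's inequality bounds this integral by the `L^p` norm of
`x - c`, which is computed exactly, times the `L^q` norm of `f'`; convexity of `|f'|^q` bounds
`∫ₐᵇ |f'|^q` by the trapezoid value `(b - a)(|f'(a)|^q + |f'(b)|^q)/2`.
-/

open MeasureTheory Set

section Trapezoid

variable {g : ℝ → ℝ} {a b : ℝ}

theorem ConvexOn.le_secant (hg : ConvexOn ℝ (Icc a b) g) (hab : a < b) {x : ℝ}
    (hx : x ∈ Icc a b) : g x ≤ ((b - x) * g a + (x - a) * g b) / (b - a) := by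
  have hd : 0 < b - a := sub_pos.2 hab
  have h := hg.2 (left_mem_Icc.2 hab.le) (right_mem_Icc.2 hab.le)
    (div_nonneg (sub_nonneg.2 hx.2) hd.le) (div_nonneg (sub_nonneg.2 hx.1) hd.le)
    (by field_simp; ring)
  have hx' : ((b - x) / (b - a)) • a + ((x - a) / (b - a)) • b = x := by
    simp only [smul_eq_mul]; field_simp; ring
  rw [hx', smul_eq_mul, smul_eq_mul] at h
  exact h.trans_eq (by ring)

theorem integral_secant (hab : a < b) (A B : ℝ) :
    ∫ x in a..b, ((b - x) * A + (x - a) * B) / (b - a) = (b - a) * (A + B) / 2 := by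
  have hd : b - a ≠ 0 := sub_ne_zero.2 hab.ne'
  rw [intervalIntegral.integral_div, intervalIntegral.integral_add
    (Continuous.intervalIntegrable (by fun_prop) _ _)
    (Continuous.intervalIntegrable (by fun_prop) _ _)]
  simp only [intervalIntegral.integral_mul_const,
    intervalIntegral.integral_comp_sub_left (fun x => x),
    intervalIntegral.integral_comp_sub_right (fun x => x), integral_id]
  field_simp
  ring

theorem ConvexOn.integral_le_trapezoid (hg : ConvexOn ℝ (Icc a b) g) (hab : a ≤ b)
    (hint : IntervalIntegrable g volume a b) :
    ∫ x in a..b, g x ≤ (b - a) * (g a + g b) / 2 := by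
  rcases hab.eq_or_lt with rfl | hab
  · simp
  calc ∫ x in a..b, g x ≤ ∫ x in a..b, ((b - x) * g a + (x - a) * g b) / (b - a) :=
        intervalIntegral.integral_mono_on hab.le hint
          (Continuous.intervalIntegrable (by fun_prop) _ _) fun x hx => hg.le_secant hab hx
    _ = (b - a) * (g a + g b) / 2 := integral_secant hab _ _

theorem ConvexOn.intervalIntegrable_of_nonneg (hg : ConvexOn ℝ (Icc a b) g) (hab : a ≤ b)
    (hg0 : ∀ x ∈ Icc a b, 0 ≤ g x) (hm : AEStronglyMeasurable g (volume.restrict (Ioc a b))) :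
    IntervalIntegrable g volume a b := by
  refine (intervalIntegrable_const (c := max (g a) (g b))).mono_fun' (by rwa [uIoc_of_le hab]) ?_
  rw [uIoc_of_le hab]
  filter_upwards [ae_restrict_mem measurableSet_Ioc] with x hx
  rw [Real.norm_of_nonneg (hg0 x (Ioc_subset_Icc_self hx))]
  exact hg.le_max_of_mem_Icc (left_mem_Icc.2 hab) (right_mem_Icc.2 hab) (Ioc_subset_Icc_self hx)

end Trapezoid

theorem intervalIntegral.abs_integral_mul_le_Lp_mul_Lq {p q : ℝ} (hpq : p.HolderConjugate q)
    {f g : ℝ → ℝ} {a b : ℝ} (hab : a ≤ b)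
    (hfm : AEStronglyMeasurable f (volume.restrict (Ioc a b)))
    (hgm : AEStronglyMeasurable g (volume.restrict (Ioc a b)))
    (hf : IntervalIntegrable (fun x => |f x| ^ p) volume a b)
    (hg : IntervalIntegrable (fun x => |g x| ^ q) volume a b) :
    |∫ x in a..b, f x * g x| ≤
      (∫ x in a..b, |f x| ^ p) ^ (1 / p) * (∫ x in a..b, |g x| ^ q) ^ (1 / q) := by
  have memLp {r : ℝ} (hr : 0 < r) {u : ℝ → ℝ}
      (hum : AEStronglyMeasurable u (volume.restrict (Ioc a b)))
      (hu : IntervalIntegrable (fun x => |u x| ^ r) volume a b) :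
      MemLp u (ENNReal.ofReal r) (volume.restrict (Ioc a b)) := by
    rw [← integrable_norm_rpow_iff hum (by simpa using hr) ENNReal.ofReal_ne_top,
      ENNReal.toReal_ofReal hr.le]
    simpa only [Real.norm_eq_abs, IntegrableOn] using
      (intervalIntegrable_iff_integrableOn_Ioc_of_le hab).1 hu
  simp only [intervalIntegral.integral_of_le hab]
  calc |∫ x in Ioc a b, f x * g x| ≤ ∫ x in Ioc a b, ‖f x‖ * ‖g x‖ := by
        simpa only [norm_mul, Real.norm_eq_abs] using
          MeasureTheory.norm_integral_le_integral_norm (fun x => f x * g x)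
    _ ≤ _ := by
        simpa only [Real.norm_eq_abs] using
          integral_mul_norm_le_Lp_mul_Lq hpq (memLp hpq.pos hfm hf) (memLp hpq.symm.pos hgm hg)

theorem intervalIntegrable_and_integral_abs_sub_rpow_right {p c b : ℝ} (hp : -1 < p)
    (hcb : c ≤ b) :
    IntervalIntegrable (fun x => |x - c| ^ p) volume c b ∧
      ∫ x in c..b, |x - c| ^ p = (b - c) ^ (p + 1) / (p + 1) := by
  have heq : EqOn (fun x => |x - c| ^ p) (fun x => (x - c) ^ p) (uIcc c b) := by
    intro x hx
    rw [uIcc_of_le hcb] at hx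
    simp only [abs_of_nonneg (sub_nonneg.2 hx.1)]
  constructor
  · refine IntervalIntegrable.congr (heq.symm.mono Ioc_subset_Icc_self) ?_
    simpa using
      (intervalIntegral.intervalIntegrable_rpow' hp (a := 0) (b := b - c)).comp_sub_right c
  · rw [intervalIntegral.integral_congr heq,
      intervalIntegral.integral_comp_sub_right (fun x => x ^ p), sub_self,
      integral_rpow (Or.inl hp), Real.zero_rpow (by linarith), sub_zero]

theorem integral_abs_sub_rpow {p a b c : ℝ} (hp : -1 < p) (hac : a ≤ c) (hcb : c ≤ b) :
    ∫ x in a..b, |x - c| ^ p = ((c - a) ^ (p + 1) + (b - c) ^ (p + 1)) / (p + 1) := by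
  obtain ⟨hint_right, h_right⟩ := intervalIntegrable_and_integral_abs_sub_rpow_right hp hcb
  obtain ⟨hint_reflected, h_reflected⟩ :=
    intervalIntegrable_and_integral_abs_sub_rpow_right (c := -c) (b := -a) hp (neg_le_neg hac)
  have hreflect : (fun x => |x - c| ^ p) = fun x => |-x - -c| ^ p := by
    funext x; rw [← abs_neg]; ring_nf
  have hint_left : IntervalIntegrable (fun x => |x - c| ^ p) volume a c := by
    rw [hreflect]; simpa using ((IntervalIntegrable.iff_comp_neg).1 hint_reflected).symm
  rw [← intervalIntegral.integral_add_adjacent_intervals hint_left hint_right, h_right, hreflect,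
    intervalIntegral.integral_comp_neg (fun x => |x - -c| ^ p), h_reflected]
  ring_nf

theorem integral_sub_mul_deriv {f f' : ℝ → ℝ} {a b : ℝ} (c : ℝ)
    (hf : ∀ x ∈ uIcc a b, HasDerivAt f (f' x) x) (hint : IntervalIntegrable f' volume a b) :
    ∫ x in a..b, (x - c) * f' x = (b - c) * f b - (a - c) * f a - ∫ x in a..b, f x := by
  simpa using intervalIntegral.integral_mul_deriv_eq_deriv_mul
    (fun x _ => (hasDerivAt_id x).sub_const c) hf intervalIntegrable_const hint

theorem weighted_mean_sub_average_eq {f f' : ℝ → ℝ} {a b lam mu : ℝ} (hab : a ≠ b)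
    (hlm : lam + mu ≠ 0) (hf : ∀ x ∈ uIcc a b, HasDerivAt f (f' x) x)
    (hint : IntervalIntegrable f' volume a b) :
    (lam * f a + mu * f b) / (lam + mu) - 1 / (b - a) * ∫ x in a..b, f x =
      1 / (b - a) * ∫ x in a..b, (x - (lam * b + mu * a) / (lam + mu)) * f' x := by
  have hd : b - a ≠ 0 := sub_ne_zero.2 hab.symm
  rw [integral_sub_mul_deriv _ hf hint]
  field_simp
  ring

theorem holder_trapezoid_bound_eq {p q lam mu d G : ℝ} (hpq : p.HolderConjugate q)
    (hlam : 0 ≤ lam) (hmu : 0 ≤ mu) (hlm : 0 < lam + mu) (hd : 0 < d) (hG : 0 ≤ G) :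
    1 / d * ((((lam * d / (lam + mu)) ^ (p + 1) + (mu * d / (lam + mu)) ^ (p + 1)) / (p + 1)) ^
        (1 / p) * (d * G / 2) ^ (1 / q)) =
      d / (lam + mu) * ((lam ^ (p + 1) + mu ^ (p + 1)) / (lam + mu)) ^ (1 / p) *
        (1 / (p + 1)) ^ (1 / p) * (1 / 2) ^ (1 / q) * G ^ (1 / q) := by
  set S := lam + mu
  set X := lam ^ (p + 1) + mu ^ (p + 1)
  have hdS : 0 < d / S := div_pos hd hlm
  have hX : 0 ≤ X / S := by positivity
  have hp1 : 0 ≤ 1 / (p + 1) := by have := hpq.pos; positivity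
  have hsum : (lam * d / S) ^ (p + 1) + (mu * d / S) ^ (p + 1) = (d / S) ^ p * d * (X / S) := by
    rw [mul_div_assoc, mul_div_assoc, Real.mul_rpow hlam hdS.le, Real.mul_rpow hmu hdS.le,
      Real.rpow_add_one hdS.ne']
    ring
  have hleft : ((d / S) ^ p * d * (X / S) / (p + 1)) ^ (1 / p) =
      d / S * d ^ (1 / p) * (X / S) ^ (1 / p) * (1 / (p + 1)) ^ (1 / p) := by
    rw [div_eq_mul_one_div _ (p + 1), Real.mul_rpow (by positivity) hp1,
      Real.mul_rpow (by positivity) hX, Real.mul_rpow (by positivity) hd.le, one_div p,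
      Real.rpow_rpow_inv hdS.le hpq.ne_zero]
  have hright : (d * G / 2) ^ (1 / q) = d ^ (1 / q) * (1 / 2) ^ (1 / q) * G ^ (1 / q) := by
    rw [show d * G / 2 = d * (1 / 2) * G by ring, Real.mul_rpow (by positivity) hG,
      Real.mul_rpow hd.le (by norm_num)]
  have hconj : d ^ (1 / p) * d ^ (1 / q) = d := by
    rw [← Real.rpow_add hd, one_div, one_div, hpq.inv_add_inv_eq_one, Real.rpow_one]
  rw [hsum, hleft, hright]
  calc _ = d / S * (X / S) ^ (1 / p) * (1 / (p + 1)) ^ (1 / p) * (1 / 2) ^ (1 / q) *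
        G ^ (1 / q) * (d ^ (1 / p) * d ^ (1 / q)) / d := by ring
    _ = _ := by rw [hconj]; field_simp

theorem stmt_7_general (I : Set ℝ) (hI : Convex ℝ I)
    (f f' : ℝ → ℝ) (a b : ℝ) (ha : a ∈ interior I) (hb : b ∈ interior I) (hab : a < b)
    (hf : ∀ x ∈ interior I, HasDerivAt f (f' x) x)
    (hint : IntervalIntegrable f' volume a b)
    (lam mu : ℝ) (hlam : 0 ≤ lam) (hmu : 0 ≤ mu) (hlm : 0 < lam + mu)
    (p q : ℝ) (hq : 1 < q) (hpq : 1 / p + 1 / q = 1)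
    (hconv : ConvexOn ℝ (Set.Icc a b) (fun x => |f' x| ^ q)) :
    |(lam * f a + mu * f b) / (lam + mu) - (1 / (b - a)) * (∫ x in a..b, f x)| ≤
      ((b - a) / (lam + mu)) * ((lam ^ (p + 1) + mu ^ (p + 1)) / (lam + mu)) ^ (1 / p) *
        (1 / (p + 1)) ^ (1 / p) * (1 / 2 : ℝ) ^ (1 / q) *
        (|f' a| ^ q + |f' b| ^ q) ^ (1 / q) := by
  have hpq' : p.HolderConjugate q :=
    (Real.holderConjugate_iff.2 ⟨hq, by simpa only [one_div, add_comm] using hpq⟩).symm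
  have hd : 0 < b - a := sub_pos.2 hab
  have hf' : ∀ x ∈ uIcc a b, HasDerivAt f (f' x) x := fun x hx =>
    hf x (hI.interior.ordConnected.out ha hb (uIcc_of_le hab.le ▸ hx))
  set c := (lam * b + mu * a) / (lam + mu) with hc
  have hca : c - a = lam * (b - a) / (lam + mu) := by rw [hc]; field_simp; ring
  have hbc : b - c = mu * (b - a) / (lam + mu) := by rw [hc]; field_simp; ring
  have hac : a ≤ c := sub_nonneg.1 (hca ▸ by positivity)
  have hcb : c ≤ b := sub_nonneg.1 (hbc ▸ by positivity)
  have hf'm : AEStronglyMeasurable f' (volume.restrict (Ioc a b)) := hint.1.aestronglyMeasurable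
  have hf'q : IntervalIntegrable (fun x => |f' x| ^ q) volume a b :=
    hconv.intervalIntegrable_of_nonneg hab.le (fun x _ => by positivity)
      ((continuous_abs.rpow_const fun _ => Or.inr (by linarith)).comp_aestronglyMeasurable hf'm)
  have hholder := intervalIntegral.abs_integral_mul_le_Lp_mul_Lq hpq' hab.le
    (f := fun x => x - c) (by fun_prop) hf'm
    (((continuous_abs.comp (continuous_sub_right c)).rpow_const
      fun _ => Or.inr hpq'.pos.le).intervalIntegrable _ _) hf'q
  rw [integral_abs_sub_rpow (by linarith [hpq'.pos]) hac hcb, hca, hbc] at hholder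
  have htrap := hconv.integral_le_trapezoid hab.le hf'q
  have hf'q_nonneg : 0 ≤ ∫ x in a..b, |f' x| ^ q :=
    intervalIntegral.integral_nonneg hab.le fun _ _ => by positivity
  rw [weighted_mean_sub_average_eq hab.ne hlm.ne' hf' hint, abs_mul, abs_of_pos (by positivity),
    ← holder_trapezoid_bound_eq hpq' hlam hmu hlm hd (by positivity)]
  gcongr
  refine hholder.trans ?_
  gcongr
  exact Real.rpow_nonneg (div_nonneg (by positivity) (by linarith [hpq'.pos])) _

/-- Corollary: the case `m = α = 1` of Theorem 2.6 of the paper. -/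
theorem stmt_7 (I : Set ℝ) (hI : Convex ℝ I) (hI0 : I ⊆ Set.Ici (0:ℝ))
    (f f' : ℝ → ℝ) (a b : ℝ) (ha : a ∈ interior I) (hb : b ∈ interior I) (hab : a < b)
    (hf : ∀ x ∈ interior I, HasDerivAt f (f' x) x)
    (hint : IntervalIntegrable f' volume a b)
    (lam mu : ℝ) (hlam : 0 ≤ lam) (hmu : 0 ≤ mu) (hlm : 0 < lam + mu)
    (p q : ℝ) (hq : 1 < q) (hpq : 1 / p + 1 / q = 1)
    (hconv : ConvexOn ℝ (Set.Icc a b) (fun x => |f' x| ^ q)) :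
    |(lam * f a + mu * f b) / (lam + mu) - (1 / (b - a)) * (∫ x in a..b, f x)| ≤
      ((b - a) / (lam + mu)) * ((lam ^ (p + 1) + mu ^ (p + 1)) / (lam + mu)) ^ (1 / p) *
        (1 / (p + 1)) ^ (1 / p) * (1 / 2 : ℝ) ^ (1 / q) *
        (|f' a| ^ q + |f' b| ^ q) ^ (1 / q) :=
  stmt_7_general I hI f f' a b ha hb hab hf hint lam mu hlam hmu hlm p q hq hpq hconv
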